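/- (Theorem 2.1: discrete variational energy dissipation law) Let M ∈ ℕ, h > 0, ε > 0, and let D ∈ ℝ^{M×M} be symmetric and negative semi-definite. Suppose vectors u^0, …, u^N ∈ ℝ^M and v^{1/2}, …, v^{N−1/2} ∈ ℝ^M satisfy, componentwise for every 1 ≤ n ≤ N and every index i: u_i^n − u_i^{n−1} = ∑_{k=1}^{n} a_{n−k}^{(n)} v_i^{k−1/2} and v_i^{n−1/2} = ε² ( D·(u^n + u^{n−1})/2 )_i − H( u_i^n, u_i^{n−1} ). Define the discrete energy E^n := h² ∑_{i=1}^{M} F(u_i^n) − (ε²/2) h² (u^n)ᵀ D u^n and the variational energy E_α^n := E^n + (h²/2) ∑_{i=1}^{M} ∑_{k=1}^{n} q_{n−k}^{(n)} ( v_i^{k−1/2} )². Then for every 1 ≤ n ≤ N, E_α^n + (h²/2) ( ∫_{t_{n−1}}^{t_n} ω_α(s) ds ) ∑_{i=1}^{M} ( v_i^{n−1/2} )² ≤ E_α^{n−1}. -/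

import Mathlib

/-!
Test the first scheme equation with `v^{n-1/2}` and the second with `u^n - u^{n-1}`.
The potential is handled by `F a - F b = (a - b) H(a, b) - (a - b)^4 / 12`, the quadratic form
by the symmetry of `D`. For the memory term, `q^{(n)}_k ≤ q^{(n-1)}_k` because
`x ↦ (x + c)^α - x^α` is decreasing (concavity of `x^α`); hence
`2 w_n ∑_k a^{(n)}_{n-k} w_k` exceeds the change of `∑_k q_{n-k} w_k²` plus
`(∑_k q^{(n)} - ∑_k q^{(n-1)}) w_n²` by `∑_k (q^{(n-1)}_k - q^{(n)}_k) (w_n - w_k)² ≥ 0`,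
and since `t_0 = 0` the difference of the kernel sums is `∫_{t_{n-1}}^{t_n} ω_α`.
-/

open Finset intervalIntegral Matrix

noncomputable def omegaK (μ s : ℝ) : ℝ := s ^ (μ - 1) / Real.Gamma μ

noncomputable def qK (α : ℝ) (t : ℕ → ℝ) (n k : ℕ) : ℝ :=
  ∫ s in (t (k - 1))..(t k), omegaK α (t n - s)

noncomputable def aK (α : ℝ) (t : ℕ → ℝ) (n k : ℕ) : ℝ :=
  if k = n then qK α t n n else qK α t n k - qK α t (n - 1) k

noncomputable def thetaAux (A : ℕ → ℕ → ℝ) (n : ℕ) : ℕ → ℕ → ℝ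
  | 0, m => if m = 0 then 1 / A n n else 0
  | M + 1, m =>
      if m ≤ M then thetaAux A n M m
      else -(1 / A (n - (M + 1)) (n - (M + 1))) *
        ∑ ℓ ∈ Finset.range (M + 1), thetaAux A n M ℓ * A (n - ℓ) (n - (M + 1))

noncomputable def thetaK (α : ℝ) (t : ℕ → ℝ) (n k : ℕ) : ℝ :=
  thetaAux (aK α t) n (n - k) (n - k)

noncomputable def Hfun (a b : ℝ) : ℝ := a ^ 3 / 3 + a * b ^ 2 / 2 + b ^ 3 / 6 - (a + b) / 2

noncomputable def Ffun (u : ℝ) : ℝ := (1 - u ^ 2) ^ 2 / 4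

noncomputable def zetaK (α : ℝ) (t : ℕ → ℝ) (n j : ℕ) : ℝ :=
  if j = n then thetaK α t n n else thetaK α t n j - thetaK α t n (j + 1)

theorem ConcaveOn.add_le_add_of_le {s : Set ℝ} {f : ℝ → ℝ} (hf : ConcaveOn ℝ s f)
    {x y c : ℝ} (hx : x ∈ s) (hyc : y + c ∈ s) (hxy : x ≤ y) (hc : 0 ≤ c) :
    f (y + c) + f x ≤ f (x + c) + f y := by
  rcases (add_nonneg (sub_nonneg.2 hxy) hc).eq_or_lt with hd | hd
  · obtain rfl : y = x := by linarith
    obtain rfl : c = 0 := by linarith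
    rfl
  -- `x + c` and `y` are the two convex combinations of `x` and `y + c` with swapped weights.
  set d := y - x + c
  have hw : (y - x) / d + c / d = 1 := by rw [← add_div, div_self hd.ne']
  have h₁ := hf.2 hx hyc (div_nonneg (sub_nonneg.2 hxy) hd.le) (div_nonneg hc hd.le) hw
  have h₂ := hf.2 hx hyc (div_nonneg hc hd.le) (div_nonneg (sub_nonneg.2 hxy) hd.le)
    ((add_comm _ _).trans hw)
  simp only [smul_eq_mul] at h₁ h₂
  rw [show (y - x) / d * x + c / d * (y + c) = x + c by field_simp; ring] at h₁
  rw [show c / d * x + (y - x) / d * (y + c) = y by field_simp; ring] at h₂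
  linear_combination h₁ + h₂ - (f x + f (y + c)) * hw

theorem Ffun_sub_le (a b : ℝ) : Ffun a - Ffun b ≤ (a - b) * Hfun a b := by
  have : (a - b) * Hfun a b - (Ffun a - Ffun b) = (a - b) ^ 4 / 12 := by
    unfold Hfun Ffun; ring
  have : 0 ≤ (a - b) ^ 4 / 12 := by positivity
  linarith

theorem Matrix.IsSymm.dotProduct_mulVec_comm {ι R : Type*} [Fintype ι] [CommSemiring R]
    {A : Matrix ι ι R} (hA : A.IsSymm) (x y : ι → R) : x ⬝ᵥ A *ᵥ y = y ⬝ᵥ A *ᵥ x := by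
  conv_lhs => rw [← hA.eq, mulVec_transpose, dotProduct_comm, ← dotProduct_mulVec]

theorem Matrix.IsSymm.dotProduct_mulVec_self_sub {ι R : Type*} [Fintype ι] [CommRing R]
    {A : Matrix ι ι R} (hA : A.IsSymm) (x y : ι → R) :
    x ⬝ᵥ A *ᵥ x - y ⬝ᵥ A *ᵥ y = (x - y) ⬝ᵥ A *ᵥ (x + y) := by
  simp only [mulVec_add, dotProduct_add, sub_dotProduct, hA.dotProduct_mulVec_comm y x]
  ring

theorem integral_omegaK {α : ℝ} (hα : 0 < α) (a b : ℝ) :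
    ∫ s in a..b, omegaK α s = (b ^ α - a ^ α) / (α * Real.Gamma α) := by
  unfold omegaK
  rw [intervalIntegral.integral_div, integral_rpow (by left; linarith), sub_add_cancel,
    div_div]

theorem qK_eq {α : ℝ} (hα : 0 < α) (t : ℕ → ℝ) (n k : ℕ) :
    qK α t n k = ((t n - t (k - 1)) ^ α - (t n - t k) ^ α) / (α * Real.Gamma α) := by
  rw [qK, intervalIntegral.integral_comp_sub_left (omegaK α), integral_omegaK hα]

theorem sum_qK {α : ℝ} (hα : 0 < α) {t : ℕ → ℝ} (ht0 : t 0 = 0) (n : ℕ) :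
    ∑ k ∈ Icc 1 n, qK α t n k = t n ^ α / (α * Real.Gamma α) := by
  simp only [qK_eq hα, ← Finset.sum_div]
  rw [← Finset.Ico_add_one_right_eq_Icc, Finset.sum_Ico_eq_sum_range, Nat.add_sub_cancel]
  simp only [add_comm 1, Nat.add_sub_cancel]
  rw [Finset.sum_range_sub' (fun k => (t n - t k) ^ α), ht0, sub_zero, sub_self,
    Real.zero_rpow hα.ne', sub_zero]

theorem qK_le_qK {α : ℝ} (hα0 : 0 < α) (hα1 : α < 1) {t : ℕ → ℝ} {k n n' : ℕ}
    (hk : t (k - 1) ≤ t k) (hkn : t k ≤ t n) (hnn' : t n ≤ t n') :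
    qK α t n' k ≤ qK α t n k := by
  rw [qK_eq hα0, qK_eq hα0]
  gcongr ?_ / _
  have := (Real.strictConcaveOn_rpow hα0 hα1).concaveOn.add_le_add_of_le
    (x := t n - t k) (y := t n' - t k) (c := t k - t (k - 1))
    (by simp only [Set.mem_Ici]; linarith) (by simp only [Set.mem_Ici]; linarith)
    (by linarith) (by linarith)
  simp only [sub_add_sub_cancel] at this
  linarith

theorem monotoneOn_Iic_of_le_succ {β : Type*} [Preorder β] {f : ℕ → β} {N : ℕ}
    (hf : ∀ n < N, f n ≤ f (n + 1)) : MonotoneOn f (Set.Iic N) := by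
  intro a _ b hb hab
  induction b, hab using Nat.le_induction with
  | base => rfl
  | succ b _ ih =>
    rw [Set.mem_Iic] at hb
    exact (ih (Set.mem_Iic.2 (by omega))).trans (hf b (by omega))

theorem sum_aK_mul (α : ℝ) (t : ℕ → ℝ) (m : ℕ) (w : ℕ → ℝ) :
    ∑ k ∈ Icc 1 (m + 1), aK α t (m + 1) k * w k
      = qK α t (m + 1) (m + 1) * w (m + 1)
        + ∑ k ∈ Icc 1 m, (qK α t (m + 1) k - qK α t m k) * w k := by
  rw [Finset.sum_Icc_succ_top (by omega), add_comm]
  congr 1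
  · simp [aK]
  · refine Finset.sum_congr rfl fun k hk => ?_
    rw [aK, if_neg (by simp at hk; omega), Nat.add_sub_cancel]

theorem sum_mul_sq_add_le_two_mul {q q' : ℕ → ℝ} {m : ℕ} (hq : ∀ k ∈ Icc 1 m, q k ≤ q' k)
    (w : ℕ → ℝ) :
    ∑ k ∈ Icc 1 (m + 1), q k * w k ^ 2
        + (∑ k ∈ Icc 1 (m + 1), q k - ∑ k ∈ Icc 1 m, q' k) * w (m + 1) ^ 2
      ≤ ∑ k ∈ Icc 1 m, q' k * w k ^ 2
        + 2 * w (m + 1) * (q (m + 1) * w (m + 1) + ∑ k ∈ Icc 1 m, (q k - q' k) * w k) := by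
  have hdefect : 0 ≤ ∑ k ∈ Icc 1 m, (q' k - q k) * (w (m + 1) - w k) ^ 2 :=
    Finset.sum_nonneg fun k hk => mul_nonneg (sub_nonneg.2 (hq k hk)) (sq_nonneg _)
  have hexpand : ∀ k, (q' k - q k) * (w (m + 1) - w k) ^ 2
      = w (m + 1) ^ 2 * q' k - w (m + 1) ^ 2 * q k - 2 * w (m + 1) * (q' k * w k)
        + 2 * w (m + 1) * (q k * w k) + (q' k * w k ^ 2 - q k * w k ^ 2) := fun k => by ring
  simp only [hexpand, Finset.sum_add_distrib, Finset.sum_sub_distrib, ← Finset.mul_sum]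
    at hdefect
  rw [Finset.sum_Icc_succ_top (by omega), Finset.sum_Icc_succ_top (by omega)]
  simp only [sub_mul, Finset.sum_sub_distrib]
  linarith

theorem sum_qK_mul_sq_add_integral_le {α : ℝ} (hα0 : 0 < α) (hα1 : α < 1) {t : ℕ → ℝ}
    (ht0 : t 0 = 0) {m : ℕ} (ht : MonotoneOn t (Set.Iic (m + 1))) (w : ℕ → ℝ) :
    ∑ k ∈ Icc 1 (m + 1), qK α t (m + 1) k * w k ^ 2
        + (∫ s in (t m)..(t (m + 1)), omegaK α s) * w (m + 1) ^ 2
      ≤ ∑ k ∈ Icc 1 m, qK α t m k * w k ^ 2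
        + 2 * w (m + 1) * ∑ k ∈ Icc 1 (m + 1), aK α t (m + 1) k * w k := by
  have hI : ∫ s in (t m)..(t (m + 1)), omegaK α s
      = ∑ k ∈ Icc 1 (m + 1), qK α t (m + 1) k - ∑ k ∈ Icc 1 m, qK α t m k := by
    rw [integral_omegaK hα0, sum_qK hα0 ht0, sum_qK hα0 ht0, sub_div]
  have hq : ∀ k ∈ Icc 1 m, qK α t (m + 1) k ≤ qK α t m k := fun k hk => by
    have hk := Finset.mem_Icc.1 hk
    have hle : ∀ {i j}, i ≤ j → j ≤ m + 1 → t i ≤ t j := fun hij hj =>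
      ht (Set.mem_Iic.2 (hij.trans hj)) (Set.mem_Iic.2 hj) hij
    exact qK_le_qK hα0 hα1 (hle (by omega) (by omega)) (hle hk.2 (by omega))
      (hle (by omega) le_rfl)
  rw [hI, sum_aK_mul]
  exact sum_mul_sq_add_le_two_mul hq w

theorem stmt17_general (α : ℝ) (hα0 : 0 < α) (hα1 : α < 1)
    (N : ℕ) (t : ℕ → ℝ) (ht0 : t 0 = 0) (ht : ∀ k, k < N → t k < t (k + 1))
    (M : ℕ) (h ε : ℝ)
    (D : Matrix (Fin M) (Fin M) ℝ) (hDsym : D.IsSymm)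
    (u v : ℕ → Fin M → ℝ)
    (hscheme1 : ∀ n, 1 ≤ n → n ≤ N → ∀ i,
      u n i - u (n - 1) i = ∑ k ∈ Finset.Icc 1 n, aK α t n k * v k i)
    (hscheme2 : ∀ n, 1 ≤ n → n ≤ N → ∀ i,
      v n i = ε ^ 2 * D.mulVec (fun j => (u n j + u (n - 1) j) / 2) i
        - Hfun (u n i) (u (n - 1) i)) :
    ∀ n, 1 ≤ n → n ≤ N →
      (h ^ 2 * ∑ i, Ffun (u n i) - ε ^ 2 / 2 * h ^ 2 * (u n ⬝ᵥ D.mulVec (u n))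
          + h ^ 2 / 2 * ∑ i, ∑ k ∈ Finset.Icc 1 n, qK α t n k * (v k i) ^ 2)
        + h ^ 2 / 2 * (∫ s in (t (n - 1))..(t n), omegaK α s) * ∑ i, (v n i) ^ 2
      ≤ h ^ 2 * ∑ i, Ffun (u (n - 1) i)
          - ε ^ 2 / 2 * h ^ 2 * (u (n - 1) ⬝ᵥ D.mulVec (u (n - 1)))
          + h ^ 2 / 2 * ∑ i, ∑ k ∈ Finset.Icc 1 (n - 1), qK α t (n - 1) k * (v k i) ^ 2 := by
  intro n hn hnN
  obtain ⟨m, rfl⟩ := Nat.exists_eq_add_of_le' hn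
  have htm : MonotoneOn t (Set.Iic (m + 1)) :=
    (monotoneOn_Iic_of_le_succ fun k hk => (ht k hk).le).mono (Set.Iic_subset_Iic.2 hnN)
  set mid : Fin M → ℝ := fun j => (u (m + 1) j + u m j) / 2
  have hstep : ∀ i, Ffun (u (m + 1) i)
        + (∑ k ∈ Icc 1 (m + 1), qK α t (m + 1) k * v k i ^ 2
          + (∫ s in (t m)..(t (m + 1)), omegaK α s) * v (m + 1) i ^ 2) / 2
      ≤ Ffun (u m i) + (∑ k ∈ Icc 1 m, qK α t m k * v k i ^ 2) / 2
        + ε ^ 2 * ((u (m + 1) i - u m i) * (D *ᵥ mid) i) := fun i => by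
    have hkernel := sum_qK_mul_sq_add_integral_le hα0 hα1 ht0 htm (v · i)
    rw [← hscheme1 (m + 1) hn hnN i, Nat.add_sub_cancel] at hkernel
    have hv := hscheme2 (m + 1) hn hnN i
    rw [Nat.add_sub_cancel] at hv
    linear_combination Ffun_sub_le (u (m + 1) i) (u m i) + hkernel / 2
      + (u (m + 1) i - u m i) * hv
  have hD : 2 * ((u (m + 1) - u m) ⬝ᵥ D *ᵥ mid)
      = u (m + 1) ⬝ᵥ D *ᵥ u (m + 1) - u m ⬝ᵥ D *ᵥ u m := by
    rw [hDsym.dotProduct_mulVec_self_sub, show mid = (2⁻¹ : ℝ) • (u (m + 1) + u m) by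
      ext j; simp [mid, div_eq_inv_mul], mulVec_smul, dotProduct_smul, smul_eq_mul]
    ring
  have hsum := Finset.sum_le_sum fun i (_ : i ∈ Finset.univ) => hstep i
  simp only [Finset.sum_add_distrib, ← Finset.sum_div, ← Finset.mul_sum] at hsum
  have hdot : (u (m + 1) - u m) ⬝ᵥ D *ᵥ mid = ∑ i, (u (m + 1) i - u m i) * (D *ᵥ mid) i := rfl
  rw [Nat.add_sub_cancel]
  linear_combination h ^ 2 * hsum + ε ^ 2 * h ^ 2 / 2 * hD - ε ^ 2 * h ^ 2 * hdot

theorem stmt17 (α : ℝ) (hα0 : 0 < α) (hα1 : α < 1)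
    (N : ℕ) (t : ℕ → ℝ) (ht0 : t 0 = 0) (ht : ∀ k, k < N → t k < t (k + 1))
    (M : ℕ) (h ε : ℝ) (hh : 0 < h) (hε : 0 < ε)
    (D : Matrix (Fin M) (Fin M) ℝ) (hDsym : D.IsSymm)
    (hDneg : ∀ w : Fin M → ℝ, w ⬝ᵥ D.mulVec w ≤ 0)
    (u v : ℕ → Fin M → ℝ)
    (hscheme1 : ∀ n, 1 ≤ n → n ≤ N → ∀ i,
      u n i - u (n - 1) i = ∑ k ∈ Finset.Icc 1 n, aK α t n k * v k i)
    (hscheme2 : ∀ n, 1 ≤ n → n ≤ N → ∀ i,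
      v n i = ε ^ 2 * D.mulVec (fun j => (u n j + u (n - 1) j) / 2) i
        - Hfun (u n i) (u (n - 1) i)) :
    ∀ n, 1 ≤ n → n ≤ N →
      (h ^ 2 * ∑ i, Ffun (u n i) - ε ^ 2 / 2 * h ^ 2 * (u n ⬝ᵥ D.mulVec (u n))
          + h ^ 2 / 2 * ∑ i, ∑ k ∈ Finset.Icc 1 n, qK α t n k * (v k i) ^ 2)
        + h ^ 2 / 2 * (∫ s in (t (n - 1))..(t n), omegaK α s) * ∑ i, (v n i) ^ 2
      ≤ h ^ 2 * ∑ i, Ffun (u (n - 1) i)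
          - ε ^ 2 / 2 * h ^ 2 * (u (n - 1) ⬝ᵥ D.mulVec (u (n - 1)))
          + h ^ 2 / 2 * ∑ i, ∑ k ∈ Finset.Icc 1 (n - 1), qK α t (n - 1) k * (v k i) ^ 2 :=
  stmt17_general α hα0 hα1 N t ht0 ht M h ε D hDsym u v hscheme1 hscheme2
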